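/- Let H be a group with finite symmetric generating set S whose word metric is δ-hyperbolic. There exists a constant C ≥ 0, depending only on H, S and δ, such that for every h ∈ H the following holds: if u, c ∈ H are such that h = c⁻¹uc, u is a conjugacy minimal element of the conjugacy class of h, and |c| is minimal among word lengths of all elements conjugating h to some conjugacy minimal element of its conjugacy class, then 2|c| + |u| ≤ |h| + C. -/

import Mathlib

open Set

/-- The word length of `h` with respect to the generating set `S`: the least `n` such
that `h` is a product of `n` elements of `S`. -/
noncomputable def wordLength {H : Type*} [Group H] (S : Set H) (h : H) : ℕ :=
  sInf {n | ∃ l : List H, l.length = n ∧ (∀ x ∈ l, x ∈ S) ∧ l.prod = h}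

/-- The word metric: `d(a,b) = |a⁻¹ b|`. -/
noncomputable def wordDist {H : Type*} [Group H] (S : Set H) (a b : H) : ℕ :=
  wordLength S (a⁻¹ * b)

/-- `g : {0,…,n} → H` is a discrete geodesic (of length `n`) in the word metric:
`d(g i, g j) = |i − j|` for all `i, j ≤ n`. -/
def IsDiscreteGeodesic {H : Type*} [Group H] (S : Set H) (g : ℕ → H) (n : ℕ) : Prop :=
  ∀ i j : ℕ, i ≤ j → j ≤ n → wordDist S (g i) (g j) = j - i

/-- The Gromov product `(x,y)_z = ½(d(x,z) + d(y,z) − d(x,y))` in the word metric. -/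
noncomputable def gromovProd {H : Type*} [Group H] (S : Set H) (x y z : H) : ℝ :=
  ((wordDist S x z : ℝ) + (wordDist S y z : ℝ) - (wordDist S x y : ℝ)) / 2

/-- The word metric of `(H,S)` is `δ`-hyperbolic: geodesic triangles in the Cayley graph
are `δ`-thin, i.e. for any `x, y, z`, any discrete geodesics `f` from `z` to `x` and `g`
from `z` to `y`, and any `i` with `i ≤ (x,y)_z`, one has `d(f i, g i) ≤ δ`. -/
def WordHyperbolic {H : Type*} [Group H] (S : Set H) (δ : ℝ) : Prop :=
  ∀ (x y z : H) (f g : ℕ → H),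
    f 0 = z → f (wordDist S z x) = x → IsDiscreteGeodesic S f (wordDist S z x) →
    g 0 = z → g (wordDist S z y) = y → IsDiscreteGeodesic S g (wordDist S z y) →
    ∀ i : ℕ, i ≤ wordDist S z x → i ≤ wordDist S z y →
      (i : ℝ) ≤ gromovProd S x y z →
      (wordDist S (f i) (g i) : ℝ) ≤ δ

/-- `h` is `κ`-almost conjugacy minimal: `|h| ≤ |h'| + κ` for every conjugate `h'` of
`h` in `H`. -/
def AlmostConjMin {H : Type*} [Group H] (S : Set H) (κ : ℝ) (h : H) : Prop :=
  ∀ g : H, (wordLength S h : ℝ) ≤ (wordLength S (g⁻¹ * h * g) : ℝ) + κ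

/-- `h` is conjugacy minimal: `|h| ≤ |h'|` for every conjugate `h'` of `h` in `H`. -/
def ConjMin {H : Type*} [Group H] (S : Set H) (h : H) : Prop :=
  ∀ g : H, wordLength S h ≤ wordLength S (g⁻¹ * h * g)

/-!
Put `w = c⁻¹ u`, so that `1, c⁻¹, w, h = w c` is a geodesic quadrilateral in the Cayley graph
with sides `|c|, |u|, |c|` and diagonal `|h|`. For a point `x` on a geodesic from `c⁻¹` to `w`,
the element `(c x)⁻¹ u (c x)` is again conjugacy minimal and is conjugate to `h` by `x⁻¹` and by
`x⁻¹ h`; minimality of `|c|` therefore keeps the whole side `[c⁻¹, w]` at distance `≥ |c|` from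
both `1` and `h`. By thinness this bounds the Gromov product at `c⁻¹`, and, when `|u|` is large
compared to `δ`, also the one at `w`, by `O(δ)`; together these give `2|c| + |u| ≤ |h| + O(δ)`.
When `|u|` is small, the points `f i` of a geodesic from `1` to `c⁻¹` near the projection of `w`
give conjugates `(f i)⁻¹ h (f i)` of length `O(δ)`, pairwise distinct since two equal ones would
splice into a conjugator shorter than `c`. So their number, which measures `2|c| - |u| - |h|`, is
at most the size of a ball of radius `O(δ)`.
-/

section

variable {H : Type*} [Group H] {S : Set H}

structure IsSymmetricGeneratingSet (S : Set H) : Prop where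
  inv_mem : ∀ s ∈ S, s⁻¹ ∈ S
  closure_eq : Subgroup.closure S = ⊤

structure IsWordGeodesic (S : Set H) (f : ℕ → H) (a b : H) : Prop where
  apply_zero : f 0 = a
  apply_wordDist : f (wordDist S a b) = b
  isDiscreteGeodesic : IsDiscreteGeodesic S f (wordDist S a b)

structure IsMinimalConjugator (S : Set H) (h u c : H) : Prop where
  conj_eq : h = c⁻¹ * u * c
  conjMin : ConjMin S u
  wordLength_le : ∀ c' u' : H, h = c'⁻¹ * u' * c' → ConjMin S u' →
    wordLength S c ≤ wordLength S c'

lemma wordLength_prod_le (l : List H) (hl : ∀ x ∈ l, x ∈ S) : wordLength S l.prod ≤ l.length :=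
  Nat.sInf_le ⟨l, rfl, hl, rfl⟩

lemma wordDist_mul_left (g a b : H) : wordDist S (g * a) (g * b) = wordDist S a b := by
  simp only [wordDist, mul_inv_rev, mul_assoc, inv_mul_cancel_left]

lemma wordDist_one_left (a : H) : wordDist S 1 a = wordLength S a := by
  rw [wordDist, inv_one, one_mul]

lemma wordDist_self_mul (a b : H) : wordDist S a (a * b) = wordLength S b := by
  rw [wordDist, inv_mul_cancel_left]

lemma wordLength_conj (g h : H) : wordLength S (g⁻¹ * h * g) = wordDist S g (h * g) := by
  rw [wordDist, mul_assoc]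

namespace IsSymmetricGeneratingSet

lemma exists_word (hS : IsSymmetricGeneratingSet S) (g : H) :
    ∃ l : List H, (∀ x ∈ l, x ∈ S) ∧ l.prod = g := by
  have hg : g ∈ (Subgroup.closure S).toSubmonoid := by simp [hS.closure_eq]
  rw [Subgroup.closure_toSubmonoid] at hg
  obtain ⟨l, hl, rfl⟩ := Submonoid.exists_list_of_mem_closure hg
  refine ⟨l, fun x hx => ?_, rfl⟩
  rcases hl x hx with hxS | hxS
  · exact hxS
  · simpa using hS.inv_mem _ (Set.mem_inv.mp hxS)

lemma exists_word_length_eq (hS : IsSymmetricGeneratingSet S) (g : H) :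
    ∃ l : List H, l.length = wordLength S g ∧ (∀ x ∈ l, x ∈ S) ∧ l.prod = g := by
  obtain ⟨l, hl, hprod⟩ := hS.exists_word g
  exact Nat.sInf_mem (s := {n | ∃ l : List H, l.length = n ∧ (∀ x ∈ l, x ∈ S) ∧ l.prod = g})
    ⟨_, l, rfl, hl, hprod⟩

lemma wordLength_mul_le (hS : IsSymmetricGeneratingSet S) (a b : H) :
    wordLength S (a * b) ≤ wordLength S a + wordLength S b := by
  obtain ⟨la, hla, hSa, rfl⟩ := hS.exists_word_length_eq a
  obtain ⟨lb, hlb, hSb, rfl⟩ := hS.exists_word_length_eq b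
  rw [← hla, ← hlb, ← List.length_append, ← List.prod_append]
  exact wordLength_prod_le _ fun x hx => (List.mem_append.mp hx).elim (hSa x) (hSb x)

lemma wordLength_inv_le (hS : IsSymmetricGeneratingSet S) (a : H) :
    wordLength S a⁻¹ ≤ wordLength S a := by
  obtain ⟨l, hl, hSl, rfl⟩ := hS.exists_word_length_eq a
  rw [List.prod_inv_reverse, ← hl, ← List.length_map (f := fun x => x⁻¹), ← List.length_reverse]
  refine wordLength_prod_le _ fun x hx => ?_
  obtain ⟨y, hy, rfl⟩ := List.mem_map.mp (List.mem_reverse.mp hx)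
  exact hS.inv_mem y (hSl y hy)

lemma wordLength_inv (hS : IsSymmetricGeneratingSet S) (a : H) :
    wordLength S a⁻¹ = wordLength S a :=
  (hS.wordLength_inv_le a).antisymm (by simpa using hS.wordLength_inv_le a⁻¹)

lemma wordDist_comm (hS : IsSymmetricGeneratingSet S) (a b : H) :
    wordDist S a b = wordDist S b a := by
  rw [wordDist, ← hS.wordLength_inv, mul_inv_rev, inv_inv, wordDist]

lemma wordDist_one_right (hS : IsSymmetricGeneratingSet S) (a : H) :
    wordDist S a 1 = wordLength S a := by
  rw [wordDist, mul_one, hS.wordLength_inv]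

lemma wordDist_triangle (hS : IsSymmetricGeneratingSet S) (a b c : H) :
    wordDist S a c ≤ wordDist S a b + wordDist S b c := by
  simpa only [wordDist, mul_assoc, mul_inv_cancel_left] using
    hS.wordLength_mul_le (a⁻¹ * b) (b⁻¹ * c)

lemma finite_wordLength_le (hS : IsSymmetricGeneratingSet S) (hSfin : S.Finite) (R : ℕ) :
    {g : H | wordLength S g ≤ R}.Finite := by
  have := hSfin.to_subtype
  refine ((List.finite_length_le S R).image fun l => (l.map Subtype.val).prod).subset ?_
  intro g hg
  obtain ⟨l, hl, hSl, rfl⟩ := hS.exists_word_length_eq g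
  refine ⟨l.attach.map fun x => ⟨x.1, hSl _ x.2⟩, ?_, ?_⟩
  · simpa [hl] using hg
  · simp [List.map_map, Function.comp_def]


lemma le_wordDist_of_two_mul_add_le (hS : IsSymmetricGeneratingSet S) {x y z : H} {i : ℕ}
    (hi : 2 * i + wordDist S x y ≤ wordDist S z x + wordDist S z y) :
    i ≤ wordDist S z x ∧ i ≤ wordDist S z y := by
  have := hS.wordDist_triangle z x y
  have := hS.wordDist_triangle z y x
  rw [hS.wordDist_comm y x] at this
  omega

lemma isDiscreteGeodesic_of_wordDist_le (hS : IsSymmetricGeneratingSet S) {f : ℕ → H} {n : ℕ}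
    (hle : ∀ i j, i ≤ j → j ≤ n → wordDist S (f i) (f j) ≤ j - i)
    (hn : n ≤ wordDist S (f 0) (f n)) : IsDiscreteGeodesic S f n := by
  intro i j hij hjn
  have := hS.wordDist_triangle (f 0) (f i) (f n)
  have := hS.wordDist_triangle (f i) (f j) (f n)
  have := hle 0 i (Nat.zero_le _) (hij.trans hjn)
  have := hle j n hjn le_rfl
  have := hle i j hij hjn
  omega

lemma exists_isWordGeodesic (hS : IsSymmetricGeneratingSet S) (a b : H) :
    ∃ f, IsWordGeodesic S f a b := by
  obtain ⟨l, hl, hSl, hprod⟩ := hS.exists_word_length_eq (a⁻¹ * b)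
  have hlen : l.length = wordDist S a b := hl
  refine ⟨fun i => a * (l.take i).prod, by simp, by simp [← hlen, hprod], ?_⟩
  refine hS.isDiscreteGeodesic_of_wordDist_le (fun i j hij _ => ?_) (by simp [← hlen, hprod])
  rw [← Nat.add_sub_cancel' hij, List.take_add, List.prod_append, ← mul_assoc,
    wordDist_self_mul, Nat.add_sub_cancel_left]
  refine (wordLength_prod_le _ fun x hx => hSl x ?_).trans (List.length_take_le _ _)
  exact List.mem_of_mem_drop (List.mem_of_mem_take hx)

end IsSymmetricGeneratingSet

namespace IsWordGeodesic

variable {f : ℕ → H} {a b : H} {i : ℕ}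

lemma wordDist_left (hf : IsWordGeodesic S f a b) (hi : i ≤ wordDist S a b) :
    wordDist S a (f i) = i := by
  simpa [hf.apply_zero] using hf.isDiscreteGeodesic 0 i (Nat.zero_le i) hi

lemma wordDist_right (hf : IsWordGeodesic S f a b) (hi : i ≤ wordDist S a b) :
    wordDist S (f i) b = wordDist S a b - i := by
  have := hf.isDiscreteGeodesic i _ hi le_rfl
  rwa [hf.apply_wordDist] at this

lemma wordDist_apply (hS : IsSymmetricGeneratingSet S) (hf : IsWordGeodesic S f a b) {j : ℕ}
    (hi : i ≤ wordDist S a b) (hj : j ≤ wordDist S a b) :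
    wordDist S (f i) (f j) = max i j - min i j := by
  rcases le_total i j with hij | hji
  · rw [hf.isDiscreteGeodesic i j hij hj]; omega
  · rw [hS.wordDist_comm, hf.isDiscreteGeodesic j i hji hi]; omega

lemma mul_left (hf : IsWordGeodesic S f a b) (g : H) :
    IsWordGeodesic S (fun t => g * f t) (g * a) (g * b) where
  apply_zero := by rw [hf.apply_zero]
  apply_wordDist := by rw [wordDist_mul_left, hf.apply_wordDist]
  isDiscreteGeodesic i j hij hj := by
    rw [wordDist_mul_left] at hj
    rw [wordDist_mul_left]
    exact hf.isDiscreteGeodesic i j hij hj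

lemma reverse (hS : IsSymmetricGeneratingSet S) (hf : IsWordGeodesic S f a b) :
    IsWordGeodesic S (fun t => f (wordDist S a b - t)) b a where
  apply_zero := by rw [Nat.sub_zero, hf.apply_wordDist]
  apply_wordDist := by rw [hS.wordDist_comm, Nat.sub_self, hf.apply_zero]
  isDiscreteGeodesic i j hij hj := by
    rw [hS.wordDist_comm b a] at hj
    rw [hS.wordDist_comm, hf.isDiscreteGeodesic _ _ (by omega) (by omega)]
    omega

lemma le_of_wordDist_le (hS : IsSymmetricGeneratingSet S) (hf : IsWordGeodesic S f a b)
    {y : H} {K : ℕ} (hi : i ≤ wordDist S a b) (hfar : wordDist S a b ≤ wordDist S b y)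
    (hclose : wordDist S (f i) y ≤ K) : i ≤ K := by
  have := hS.wordDist_triangle b (f i) y
  rw [hS.wordDist_comm b (f i), hf.wordDist_right hi] at this
  omega

end IsWordGeodesic

lemma WordHyperbolic.wordDist_le_ceil {δ : ℝ} (hhyp : WordHyperbolic S δ)
    (hS : IsSymmetricGeneratingSet S) {f g : ℕ → H} {x y z : H} (hf : IsWordGeodesic S f z x)
    (hg : IsWordGeodesic S g z y) {i : ℕ}
    (hi : 2 * i + wordDist S x y ≤ wordDist S z x + wordDist S z y) :
    wordDist S (f i) (g i) ≤ ⌈δ⌉₊ := by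
  obtain ⟨hix, hiy⟩ := hS.le_wordDist_of_two_mul_add_le hi
  have hthin := hhyp x y z f g hf.apply_zero hf.apply_wordDist hf.isDiscreteGeodesic
    hg.apply_zero hg.apply_wordDist hg.isDiscreteGeodesic i hix hiy (by
      have : (2 * i + wordDist S x y : ℝ) ≤ wordDist S z x + wordDist S z y := by exact_mod_cast hi
      rw [gromovProd, hS.wordDist_comm x z, hS.wordDist_comm y z]
      linarith)
  exact_mod_cast hthin.trans (Nat.le_ceil δ)

lemma ConjMin.conj {u g : H} (hu : ConjMin S u)
    (hg : wordLength S (g⁻¹ * u * g) ≤ wordLength S u) : ConjMin S (g⁻¹ * u * g) := fun a =>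
  hg.trans ((hu (g * a)).trans_eq (by group))

namespace IsMinimalConjugator

variable {h u c : H}

lemma wordDist_conj (hc : IsMinimalConjugator S h u c) :
    wordDist S (c⁻¹ * u) h = wordLength S c := by
  rw [wordDist, hc.conj_eq]
  group

lemma le_wordDist (hS : IsSymmetricGeneratingSet S) (hc : IsMinimalConjugator S h u c) {x : H}
    (hx : wordDist S c⁻¹ x + wordDist S x (c⁻¹ * u) ≤ wordLength S u) :
    wordLength S c ≤ wordDist S 1 x ∧ wordLength S c ≤ wordDist S h x := by
  have hv : ConjMin S ((c * x)⁻¹ * u * (c * x)) := hc.conjMin.conj <| by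
    calc wordLength S ((c * x)⁻¹ * u * (c * x))
        ≤ wordLength S ((c * x)⁻¹ * u) + wordLength S (c * x) := hS.wordLength_mul_le _ _
      _ = wordDist S x (c⁻¹ * u) + wordDist S c⁻¹ x := by simp [wordDist, mul_assoc]
      _ ≤ wordLength S u := by omega
  constructor
  · calc wordLength S c ≤ wordLength S x⁻¹ :=
          hc.wordLength_le _ _ (by rw [hc.conj_eq]; group) hv
      _ = wordDist S 1 x := by rw [hS.wordLength_inv, wordDist_one_left]
  · calc wordLength S c ≤ wordLength S (x⁻¹ * h) :=
          hc.wordLength_le _ _ (by rw [hc.conj_eq]; group) hv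
      _ = wordDist S h x := by rw [wordDist, ← hS.wordLength_inv]; group

lemma injOn_conj (hS : IsSymmetricGeneratingSet S) (hc : IsMinimalConjugator S h u c) {f : ℕ → H}
    (hf : IsWordGeodesic S f 1 c⁻¹) :
    InjOn (fun i => (f i)⁻¹ * h * f i) (Iic (wordLength S c)) := by
  have hk : wordDist S 1 c⁻¹ = wordLength S c := by rw [wordDist_one_left, hS.wordLength_inv]
  have hne : ∀ i j, i < j → j ≤ wordLength S c → (f i)⁻¹ * h * f i ≠ (f j)⁻¹ * h * f j := by
    intro i j hij hj heq
    have hshorter := hc.wordLength_le (c * f j * (f i)⁻¹) u ?_ hc.conjMin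
    · have hj' : wordLength S (c * f j) = wordLength S c - j := by
        have := hf.wordDist_right (i := j) (by omega)
        rwa [hS.wordDist_comm, wordDist, inv_inv, hk] at this
      have hi' : wordLength S (f i)⁻¹ = i := by
        rw [hS.wordLength_inv, ← wordDist_one_left, hf.wordDist_left (by omega)]
      have := hS.wordLength_mul_le (c * f j) (f i)⁻¹
      omega
    · calc h = f i * ((f i)⁻¹ * h * f i) * (f i)⁻¹ := by group
        _ = f i * ((f j)⁻¹ * h * f j) * (f i)⁻¹ := by rw [heq]
        _ = (c * f j * (f i)⁻¹)⁻¹ * u * (c * f j * (f i)⁻¹) := by rw [hc.conj_eq]; group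
  intro i hi j hj heq
  rcases lt_trichotomy i j with hij | rfl | hji
  · exact (hne i j hij hj heq).elim
  · rfl
  · exact (hne j i hji hi heq.symm).elim

lemma wordLength_add_le {δ : ℝ} (hS : IsSymmetricGeneratingSet S) (hhyp : WordHyperbolic S δ)
    (hc : IsMinimalConjugator S h u c) :
    wordLength S c + wordLength S u ≤ wordLength S (c⁻¹ * u) + 2 * ⌈δ⌉₊ + 1 := by
  obtain ⟨f, hf⟩ := hS.exists_isWordGeodesic c⁻¹ 1
  obtain ⟨p, hp⟩ := hS.exists_isWordGeodesic c⁻¹ (c⁻¹ * u)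
  have hk : wordDist S c⁻¹ 1 = wordLength S c := by
    rw [hS.wordDist_one_right, hS.wordLength_inv]
  have hμ : wordDist S c⁻¹ (c⁻¹ * u) = wordLength S u := wordDist_self_mul _ _
  have hD : wordDist S 1 (c⁻¹ * u) = wordLength S (c⁻¹ * u) := wordDist_one_left _
  have htri := hS.wordDist_triangle 1 c⁻¹ (c⁻¹ * u)
  rw [hS.wordDist_comm 1 c⁻¹, hk, hμ, hD] at htri
  set t := (wordLength S c + wordLength S u - wordLength S (c⁻¹ * u)) / 2
  have ht : 2 * t + wordDist S 1 (c⁻¹ * u) ≤ wordDist S c⁻¹ 1 + wordDist S c⁻¹ (c⁻¹ * u) := by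
    omega
  obtain ⟨htk, htμ⟩ := hS.le_wordDist_of_two_mul_add_le ht
  have hfar := (hc.le_wordDist hS (x := p t) (by
    rw [hp.wordDist_left htμ, hp.wordDist_right htμ, hμ]; omega)).1
  have := hf.le_of_wordDist_le hS htk (hk ▸ hfar) (hhyp.wordDist_le_ceil hS hf hp ht)
  omega

lemma le_two_mul_ceil_of_two_mul_add_le {δ : ℝ} (hS : IsSymmetricGeneratingSet S)
    (hhyp : WordHyperbolic S δ) (hc : IsMinimalConjugator S h u c) {t : ℕ}
    (ht₁ : 2 * t + wordLength S h ≤ wordLength S (c⁻¹ * u) + wordLength S c)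
    (ht₂ : 2 * t + wordLength S c ≤ wordLength S (c⁻¹ * u) + wordLength S u) :
    t ≤ 2 * ⌈δ⌉₊ := by
  obtain ⟨e, he⟩ := hS.exists_isWordGeodesic (c⁻¹ * u) 1
  obtain ⟨r, hr⟩ := hS.exists_isWordGeodesic (c⁻¹ * u) h
  obtain ⟨p, hp⟩ := hS.exists_isWordGeodesic (c⁻¹ * u) c⁻¹
  have hD : wordDist S (c⁻¹ * u) 1 = wordLength S (c⁻¹ * u) := hS.wordDist_one_right _
  have hk : wordDist S (c⁻¹ * u) h = wordLength S c := hc.wordDist_conj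
  have hμ : wordDist S (c⁻¹ * u) c⁻¹ = wordLength S u := by
    rw [hS.wordDist_comm, wordDist_self_mul]
  have ht₁' : 2 * t + wordDist S 1 h ≤ wordDist S (c⁻¹ * u) 1 + wordDist S (c⁻¹ * u) h := by
    rwa [wordDist_one_left, hD, hk]
  have ht₂' : 2 * t + wordDist S 1 c⁻¹ ≤ wordDist S (c⁻¹ * u) 1 + wordDist S (c⁻¹ * u) c⁻¹ := by
    rwa [wordDist_one_left, hS.wordLength_inv, hD, hμ]
  have her := hhyp.wordDist_le_ceil hS he hr ht₁'
  have hep := hhyp.wordDist_le_ceil hS he hp ht₂'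
  have htk := (hS.le_wordDist_of_two_mul_add_le ht₁').2
  have htμ := (hS.le_wordDist_of_two_mul_add_le ht₂').2
  have hfar := (hc.le_wordDist hS (x := p t) (by
    rw [hS.wordDist_comm c⁻¹, hp.wordDist_right htμ, hS.wordDist_comm (p t),
      hp.wordDist_left htμ, hμ]
    omega)).2
  have hclose := hS.wordDist_triangle (r t) (e t) (p t)
  rw [hS.wordDist_comm (r t) (e t)] at hclose
  exact hr.le_of_wordDist_le hS htk (hk ▸ hfar) (by omega)

lemma wordLength_conj_le {δ : ℝ} (hS : IsSymmetricGeneratingSet S) (hhyp : WordHyperbolic S δ)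
    (hc : IsMinimalConjugator S h u c) {f : ℕ → H} (hf : IsWordGeodesic S f 1 c⁻¹) {i : ℕ}
    (hi₁ : wordLength S (c⁻¹ * u) + wordLength S h ≤ 2 * i + wordLength S c)
    (hi₂ : 2 * i + wordLength S u ≤ wordLength S c + wordLength S (c⁻¹ * u)) :
    wordLength S ((f i)⁻¹ * h * f i) ≤ 2 * ⌈δ⌉₊ + wordLength S u := by
  obtain ⟨e, he⟩ := hS.exists_isWordGeodesic 1 (c⁻¹ * u)
  have hr : IsWordGeodesic S (fun t => h * f t) h (c⁻¹ * u) := by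
    have hw : h * c⁻¹ = c⁻¹ * u := by rw [hc.conj_eq]; group
    simpa only [mul_one, hw] using hf.mul_left h
  have hk : wordDist S 1 c⁻¹ = wordLength S c := by rw [wordDist_one_left, hS.wordLength_inv]
  have hk' : wordDist S h (c⁻¹ * u) = wordLength S c := by rw [hS.wordDist_comm, hc.wordDist_conj]
  have hD : wordDist S 1 (c⁻¹ * u) = wordLength S (c⁻¹ * u) := wordDist_one_left _
  have hμ : wordDist S c⁻¹ (c⁻¹ * u) = wordLength S u := wordDist_self_mul _ _
  have hDk := hS.wordDist_triangle 1 c⁻¹ (c⁻¹ * u)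
  have hkD := hS.wordDist_triangle 1 (c⁻¹ * u) c⁻¹
  rw [hS.wordDist_comm (c⁻¹ * u)] at hkD
  have hfe := hhyp.wordDist_le_ceil hS hf he (i := i) (by rw [hk, hD, hμ]; omega)
  have her := hhyp.wordDist_le_ceil hS (he.reverse hS) (hr.reverse hS)
    (i := wordDist S 1 (c⁻¹ * u) - i) (by
      rw [hS.wordDist_comm (c⁻¹ * u) 1, hS.wordDist_comm (c⁻¹ * u) h, hk', hD, wordDist_one_left]
      omega)
  simp only [hk', hD, Nat.sub_sub_self (show i ≤ wordLength S (c⁻¹ * u) by omega)] at her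
  have hff := hf.wordDist_apply hS (i := wordLength S c - (wordLength S (c⁻¹ * u) - i)) (j := i)
    (by omega) (by omega)
  -- `f i` is `δ`-close to `e i`, which is `δ`-close to `h f j` for some `j` with `|i - j| ≤ |u|`
  have h₁ := hS.wordDist_triangle (f i) (e i) (h * f i)
  have h₂ := hS.wordDist_triangle (e i) (h * f (wordLength S c - (wordLength S (c⁻¹ * u) - i)))
    (h * f i)
  rw [wordDist_mul_left] at h₂
  rw [wordLength_conj]
  omega

lemma two_mul_wordLength_le {δ : ℝ} (hS : IsSymmetricGeneratingSet S) (hSfin : S.Finite)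
    (hhyp : WordHyperbolic S δ) (hc : IsMinimalConjugator S h u c) {R : ℕ}
    (hR : 2 * ⌈δ⌉₊ + wordLength S u ≤ R) :
    2 * wordLength S c ≤
      wordLength S h + 2 * {g : H | wordLength S g ≤ R}.ncard + wordLength S u := by
  obtain ⟨f, hf⟩ := hS.exists_isWordGeodesic 1 c⁻¹
  have hu_le := hS.wordLength_mul_le c (c⁻¹ * u)
  have hw_le := hS.wordLength_mul_le c⁻¹ u
  have hc_le := hS.wordDist_triangle (c⁻¹ * u) 1 h
  rw [mul_inv_cancel_left] at hu_le
  rw [hS.wordLength_inv] at hw_le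
  rw [hc.wordDist_conj, hS.wordDist_one_right, wordDist_one_left] at hc_le
  have hcard := Set.ncard_le_ncard_of_injOn (fun i => (f i)⁻¹ * h * f i)
    (s := Icc ((wordLength S (c⁻¹ * u) + wordLength S h - wordLength S c + 1) / 2)
      ((wordLength S c + wordLength S (c⁻¹ * u) - wordLength S u) / 2))
    (fun i ⟨hi₁, hi₂⟩ => (hc.wordLength_conj_le hS hhyp hf (by omega) (by omega)).trans hR)
    ((hc.injOn_conj hS hf).mono fun i ⟨_, hi₂⟩ => show i ≤ wordLength S c by omega)
    (hS.finite_wordLength_le hSfin R)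
  rw [Set.ncard_Icc_nat] at hcard
  omega

end IsMinimalConjugator

end

theorem stmt6_general {H : Type*} [Group H] (S : Set H) (δ : ℝ)
    (hSfin : S.Finite) (hSsym : ∀ s ∈ S, s⁻¹ ∈ S) (hSgen : Subgroup.closure S = ⊤)
    (hhyp : WordHyperbolic S δ) :
    ∃ C : ℝ, 0 ≤ C ∧
      ∀ h u c : H, h = c⁻¹ * u * c → ConjMin S u →
        (∀ c' u' : H, h = c'⁻¹ * u' * c' → ConjMin S u' →
          wordLength S c ≤ wordLength S c') →
        2 * (wordLength S c : ℝ) + (wordLength S u : ℝ) ≤ (wordLength S h : ℝ) + C := by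
  have hS : IsSymmetricGeneratingSet S := ⟨hSsym, hSgen⟩
  set Δ := ⌈δ⌉₊
  set N := {g : H | wordLength S g ≤ 5 * Δ + 1}.ncard
  refine ⟨(2 * N + 6 * Δ + 2 : ℕ), Nat.cast_nonneg _, fun h u c hconj hu hmin => ?_⟩
  have hc : IsMinimalConjugator S h u c := ⟨hconj, hu, hmin⟩
  have hcu := hc.wordLength_add_le hS hhyp
  suffices 2 * wordLength S c + wordLength S u ≤ wordLength S h + (2 * N + 6 * Δ + 2) by
    exact_mod_cast this
  rcases le_or_gt (wordLength S u) (3 * Δ + 1) with hμ | hμ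
  · have := hc.two_mul_wordLength_le hS hSfin hhyp (R := 5 * Δ + 1) (by omega)
    omega
  · by_contra hlt
    have := hc.le_two_mul_ceil_of_two_mul_add_le hS hhyp (t := 2 * Δ + 1) (by omega) (by omega)
    omega

/-- Let `H` be a group with finite symmetric generating set `S` whose
word metric is `δ`-hyperbolic. There is a constant `C ≥ 0`, depending only on `H`, `S`,
`δ`, such that for all `h, u, c ∈ H` with `h = c⁻¹uc`, `u` conjugacy minimal in the
conjugacy class of `h`, and `|c|` minimal among lengths of elements conjugating `h` to a
conjugacy minimal element of its class, one has `2|c| + |u| ≤ |h| + C`. -/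
theorem stmt6 {H : Type*} [Group H] (S : Set H) (δ : ℝ)
    (hSfin : S.Finite) (hSsym : ∀ s ∈ S, s⁻¹ ∈ S) (hSgen : Subgroup.closure S = ⊤)
    (hδ : 0 ≤ δ) (hhyp : WordHyperbolic S δ) :
    ∃ C : ℝ, 0 ≤ C ∧
      ∀ h u c : H, h = c⁻¹ * u * c → ConjMin S u →
        (∀ c' u' : H, h = c'⁻¹ * u' * c' → ConjMin S u' →
          wordLength S c ≤ wordLength S c') →
        2 * (wordLength S c : ℝ) + (wordLength S u : ℝ) ≤ (wordLength S h : ℝ) + C :=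
  stmt6_general S δ hSfin hSsym hSgen hhyp
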